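/- Let (κ,ρ) ∈ W, let (a,b,m,n) be an element of ABMN(κ,ρ), and for i ∈ ℤ set M_i = m_{i+1} − m_{i−1}, N_i = n_{i−1} − n_{i+1}, Δ_i m = m_{i+1} + m_{i−1} − 2m_i and Δ_i n = n_{i−1} + n_{i+1} − 2n_i. Then for every i ∈ ℤ: (1) a_i = κρ M_i^{1+ρ} N_i^ρ/(M_i^ρ + N_i^ρ)² and b_i = κρ M_i^ρ N_i^{1+ρ}/(M_i^ρ + N_i^ρ)²; (2) a_i^ρ/(a_i^ρ + b_i^ρ) = M_i^ρ/(M_i^ρ + N_i^ρ) and b_i^ρ/(a_i^ρ + b_i^ρ) = N_i^ρ/(M_i^ρ + N_i^ρ); (3) κρ M_i^{1+ρ} N_i^ρ = (κ/2) M_i (M_i^{2ρ} − N_i^{2ρ}) + (1/2)(M_i^ρ + N_i^ρ)² Δ_i m; (4) κρ M_i^ρ N_i^{1+ρ} = (κ/2) N_i (N_i^{2ρ} − M_i^{2ρ}) + (1/2)(M_i^ρ + N_i^ρ)² Δ_i n. -/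
import Mathlib


open Real Filter Set

noncomputable section

/-- The ABMN(κ,ρ) system on ℤ: a quadruple of sequences `(a,b,m,n)` with `a,b` positive
satisfying the four ABMN equations at every integer index. -/
def ABMN (κ ρ : ℝ) (a b m n : ℤ → ℝ) : Prop :=
  (∀ i : ℤ, 0 < a i) ∧ (∀ i : ℤ, 0 < b i) ∧
    ∀ i : ℤ,
      2 * (a i ^ ρ + b i ^ ρ) * (m i + a i)
          = (a i ^ ρ * (1 - κ) + b i ^ ρ * (1 + κ)) * m (i - 1)
            + (a i ^ ρ * (1 + κ) + b i ^ ρ * (1 - κ)) * m (i + 1) ∧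
      2 * (a i ^ ρ + b i ^ ρ) * (n i + b i)
          = (a i ^ ρ * (1 - κ) + b i ^ ρ * (1 + κ)) * n (i - 1)
            + (a i ^ ρ * (1 + κ) + b i ^ ρ * (1 - κ)) * n (i + 1) ∧
      (a i ^ ρ + b i ^ ρ) ^ 2 = ρ * κ * a i ^ (ρ - 1) * b i ^ ρ * (m (i + 1) - m (i - 1)) ∧
      (a i ^ ρ + b i ^ ρ) ^ 2 = ρ * κ * a i ^ ρ * b i ^ (ρ - 1) * (n (i - 1) - n (i + 1))

theorem stmt17 (κ ρ : ℝ) (hκ : κ ∈ Set.Ioc (0:ℝ) 1) (hρ : 0 < ρ) (hW : ρ ^ 2 * κ ≤ 1)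
    (a b m n : ℤ → ℝ) (h : ABMN κ ρ a b m n) (i : ℤ)
    (M N Dm Dn : ℝ)
    (hM : M = m (i + 1) - m (i - 1)) (hN : N = n (i - 1) - n (i + 1))
    (hDm : Dm = m (i + 1) + m (i - 1) - 2 * m i)
    (hDn : Dn = n (i - 1) + n (i + 1) - 2 * n i) :
    a i = κ * ρ * M ^ (1 + ρ) * N ^ ρ / (M ^ ρ + N ^ ρ) ^ 2 ∧
    b i = κ * ρ * M ^ ρ * N ^ (1 + ρ) / (M ^ ρ + N ^ ρ) ^ 2 ∧
    a i ^ ρ / (a i ^ ρ + b i ^ ρ) = M ^ ρ / (M ^ ρ + N ^ ρ) ∧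
    b i ^ ρ / (a i ^ ρ + b i ^ ρ) = N ^ ρ / (M ^ ρ + N ^ ρ) ∧
    κ * ρ * M ^ (1 + ρ) * N ^ ρ
      = (κ / 2) * M * (M ^ (2 * ρ) - N ^ (2 * ρ)) + (1 / 2) * (M ^ ρ + N ^ ρ) ^ 2 * Dm ∧
    κ * ρ * M ^ ρ * N ^ (1 + ρ)
      = (κ / 2) * N * (N ^ (2 * ρ) - M ^ (2 * ρ)) + (1 / 2) * (M ^ ρ + N ^ ρ) ^ 2 * Dn := by

  obtain ⟨ha, hb, hsys⟩ := h
  obtain ⟨e1, e2, e3, e4⟩ := hsys i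
  have hκ0 : 0 < κ := hκ.1
  set A := a i with hA'
  set B := b i with hB'
  have hA : 0 < A := ha i
  have hB : 0 < B := hb i
  rw [← hM] at e3
  rw [← hN] at e4
  set x := A ^ ρ with hx'
  set y := B ^ ρ with hy'
  set p := M ^ ρ with hp'
  set q := N ^ ρ with hq'
  have hx : 0 < x := by rw [hx']; exact Real.rpow_pos_of_pos hA ρ
  have hy : 0 < y := by rw [hy']; exact Real.rpow_pos_of_pos hB ρ
  have hu : 0 < A ^ (ρ - 1) := Real.rpow_pos_of_pos hA _
  have hv : 0 < B ^ (ρ - 1) := Real.rpow_pos_of_pos hB _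
  have hS : 0 < x + y := add_pos hx hy
  -- positivity of M
  have hcM : 0 < ρ * κ * A ^ (ρ - 1) * y * M := e3 ▸ pow_pos hS 2
  have hcM' : 0 < ρ * κ * A ^ (ρ - 1) * y :=
    mul_pos (mul_pos (mul_pos hρ hκ0) hu) hy
  have hMpos : 0 < M := by
    rcases mul_pos_iff.mp hcM with h0 | h0
    · exact h0.2
    · linarith [hcM', h0.1]
  have hcN : 0 < ρ * κ * x * B ^ (ρ - 1) * N := e4 ▸ pow_pos hS 2
  have hcN' : 0 < ρ * κ * x * B ^ (ρ - 1) :=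
    mul_pos (mul_pos (mul_pos hρ hκ0) hx) hv
  have hNpos : 0 < N := by
    rcases mul_pos_iff.mp hcN with h0 | h0
    · exact h0.2
    · linarith [hcN', h0.1]
  have hp : 0 < p := by rw [hp']; exact Real.rpow_pos_of_pos hMpos ρ
  have hq : 0 < q := by rw [hq']; exact Real.rpow_pos_of_pos hNpos ρ
  have hAρ : A ^ (ρ - 1) * A = x := by
    rw [hx', ← Real.rpow_add_one hA.ne' (ρ - 1)]
    norm_num
  have hBρ : B ^ (ρ - 1) * B = y := by
    rw [hy', ← Real.rpow_add_one hB.ne' (ρ - 1)]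
    norm_num
  have hMN : ρ * κ * (A ^ (ρ - 1) * B ^ (ρ - 1)) * (B * M)
      = ρ * κ * (A ^ (ρ - 1) * B ^ (ρ - 1)) * (A * N) := by
    linear_combination (e4 - e3) + (ρ * κ * A ^ (ρ - 1) * M) * hBρ
      - (ρ * κ * B ^ (ρ - 1) * N) * hAρ
  have hBM : B * M = A * N :=
    mul_left_cancel₀ (mul_pos (mul_pos hρ hκ0) (mul_pos hu hv)).ne' hMN
  have hpq : x * q = y * p := by
    rw [hx', hy', hp', hq', ← Real.mul_rpow hA.le hNpos.le,
      ← Real.mul_rpow hB.le hMpos.le, hBM]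
  have hSA : (x + y) ^ 2 * A = ρ * κ * x * y * M := by
    linear_combination A * e3 + (ρ * κ * y * M) * hAρ
  have hSB : (x + y) ^ 2 * B = ρ * κ * x * y * N := by
    linear_combination B * e4 + (ρ * κ * x * N) * hBρ
  have k1 : A * (p + q) ^ 2 * x ^ 2 = κ * ρ * M * p * q * x ^ 2 := by
    linear_combination p ^ 2 * hSA + (A * (2 * p * x + q * x + p * y) - κ * ρ * M * p * x) * hpq
  have key1 : A * (p + q) ^ 2 = κ * ρ * M * p * q :=
    mul_right_cancel₀ (pow_ne_zero 2 hx.ne') k1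
  have k2 : B * (p + q) ^ 2 * x ^ 2 = κ * ρ * N * p * q * x ^ 2 := by
    linear_combination p ^ 2 * hSB + (B * (2 * p * x + q * x + p * y) - κ * ρ * N * p * x) * hpq
  have key2 : B * (p + q) ^ 2 = κ * ρ * N * p * q :=
    mul_right_cancel₀ (pow_ne_zero 2 hx.ne') k2
  have hM1ρ : M ^ (1 + ρ) = M * p := by
    rw [hp', Real.rpow_add hMpos, Real.rpow_one]
  have hN1ρ : N ^ (1 + ρ) = N * q := by
    rw [hq', Real.rpow_add hNpos, Real.rpow_one]
  have hM2ρ : M ^ (2 * ρ) = p ^ 2 := by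
    rw [hp', mul_comm, Real.rpow_mul hMpos.le, Real.rpow_two]
  have hN2ρ : N ^ (2 * ρ) = q ^ 2 := by
    rw [hq', mul_comm, Real.rpow_mul hNpos.le, Real.rpow_two]
  have hE1 : 2 * (x + y) * A = (x + y) * Dm + κ * (x - y) * M := by
    rw [hDm, hM]; linear_combination e1
  have hE2 : 2 * (x + y) * B = (x + y) * Dn + κ * (y - x) * N := by
    rw [hDn, hN]; linear_combination e2
  have h2S : (2 * (x + y)) ≠ 0 := (mul_pos two_pos hS).ne'
  refine ⟨?_, ?_, ?_, ?_, ?_, ?_⟩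
  · rw [hM1ρ, eq_div_iff (pow_ne_zero 2 (add_pos hp hq).ne')]
    linear_combination key1
  · rw [hN1ρ, eq_div_iff (pow_ne_zero 2 (add_pos hp hq).ne')]
    linear_combination key2
  · rw [div_eq_div_iff hS.ne' (add_pos hp hq).ne']
    linear_combination hpq
  · rw [div_eq_div_iff hS.ne' (add_pos hp hq).ne']
    linear_combination -hpq
  · rw [hM1ρ, hM2ρ, hN2ρ]
    apply mul_right_cancel₀ h2S
    linear_combination (-(2 * (x + y))) * key1 + (p + q) ^ 2 * hE1 + 2 * κ * M * (p + q) * hpq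
  · rw [hN1ρ, hN2ρ, hM2ρ]
    apply mul_right_cancel₀ h2S
    linear_combination (-(2 * (x + y))) * key2 + (p + q) ^ 2 * hE2 - 2 * κ * N * (p + q) * hpq
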